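/- Let A be a two-element lattice and C = Clo(A). Then the relational structure ⟨A;C•⟩ is not polymorphism-homogeneous. -/
import Mathlib


/- Common framework: operations, relations, clones, preservation,
   primitive positive definability, polymorphism-homogeneity. -/

namespace PaperPH

/-- `Op A n` is the set of `n`-ary operations on `A`. -/
abbrev Op (A : Type*) (n : ℕ) := (Fin n → A) → A

/-- A family of operations on `A`, sorted by arity. -/
abbrev OpFamily (A : Type*) := ∀ n : ℕ, Set (Op A n)

/-- A family of relations on `A`, sorted by arity. -/
abbrev RelFamily (A : Type*) := ∀ n : ℕ, Set (Set (Fin n → A))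

variable {A : Type*}

/-- The `k`-ary partial operation given by the total map `h` together with domain `D`
preserves the `n`-ary relation `ρ`: for every `n × k` matrix all of whose rows lie in `D`
and all of whose columns lie in `ρ`, applying `h` to the rows yields a tuple in `ρ`. -/
def pPreserves {k n : ℕ} (D : Set (Fin k → A)) (h : Op A k) (ρ : Set (Fin n → A)) : Prop :=
  ∀ M : Fin n → Fin k → A,
    (∀ i, M i ∈ D) → (∀ j, (fun i => M i j) ∈ ρ) → (fun i => h (M i)) ∈ ρ

/-- `h` (with domain `D`) preserves every relation of the family `R`. -/
def pPreservesAll {k : ℕ} (D : Set (Fin k → A)) (h : Op A k) (R : RelFamily A) : Prop :=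
  ∀ n, ∀ ρ ∈ R n, pPreserves D h ρ

/-- The relational structure `⟨A; R⟩` is polymorphism-homogeneous: for every `k ≥ 1`,
every partial operation preserving all relations of `R` extends to a total operation
preserving all relations of `R`. -/
def RelPolyHom (R : RelFamily A) : Prop :=
  ∀ k, 1 ≤ k → ∀ (D : Set (Fin k → A)) (h : Op A k), pPreservesAll D h R →
    ∃ g : Op A k, (∀ x ∈ D, g x = h x) ∧ pPreservesAll Set.univ g R

/-- A family of operations is a clone if it contains all projections and is closed
under composition. -/
def IsClone (C : OpFamily A) : Prop :=
  (∀ (n : ℕ) (i : Fin n), (fun x => x i) ∈ C n) ∧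
  (∀ (n k : ℕ) (f : Op A n) (g : Fin n → Op A k),
    f ∈ C n → (∀ i, g i ∈ C k) → (fun x => f (fun i => g i x)) ∈ C k)

/-- The clone generated by a family `F` of operations; for an algebra with basic
operations `F` this is its clone `Clo(A)` of term operations. -/
def CloGen (F : OpFamily A) : OpFamily A :=
  fun n => { f | ∀ C : OpFamily A, IsClone C → (∀ m, F m ⊆ C m) → f ∈ C n }

/-- The graph `f•` of an `n`-ary operation `f`: the solution set of
`f(x_1,…,x_n) = x_{n+1}`. -/
def graphRel {n : ℕ} (f : Op A n) : Set (Fin (n + 1) → A) :=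
  { a | f (fun i => a i.castSucc) = a (Fin.last n) }

/-- `C•`: the family of graphs of the operations in `C`. -/
def Cdot (C : OpFamily A) : RelFamily A := fun m =>
  match m with
  | 0 => ∅
  | n + 1 => { ρ | ∃ f ∈ C n, ρ = graphRel f }

/-- `C°`: the family of solution sets `Sol(f,g) = {a | f(a) = g(a)}` of equations
between members of `C` of the same arity. -/
def Ccirc (C : OpFamily A) : RelFamily A := fun n =>
  { ρ | ∃ f ∈ C n, ∃ g ∈ C n, ρ = { a | f a = g a } }

/-- `Pol R`: all total operations preserving every relation in `R`. -/
def PolOps (R : RelFamily A) : OpFamily A := fun k =>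
  { h | pPreservesAll Set.univ h R }

/-- `Inv F`: all relations preserved by every operation in `F`. -/
def InvRels (F : OpFamily A) : RelFamily A := fun n =>
  { ρ | ∀ k, 1 ≤ k → ∀ h ∈ F k, pPreserves (Set.univ : Set (Fin k → A)) h ρ }

/-- `⟨R⟩_∄`: the relations definable by quantifier-free primitive positive formulas
over `R`, i.e. by conjunctions of atomic formulas `τ_i(x_{σ_i(1)},…,x_{σ_i(r_i)})`
with `τ_i ∈ R`. -/
def qfDef (R : RelFamily A) : RelFamily A := fun n =>
  { ρ | ∃ (t : ℕ) (r : Fin t → ℕ) (τ : ∀ i : Fin t, Set (Fin (r i) → A))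
      (σ : ∀ i : Fin t, Fin (r i) → Fin n),
      (∀ i, τ i ∈ R (r i)) ∧
      ρ = { a | ∀ i, (fun j => a (σ i j)) ∈ τ i } }

/-- `⟨R⟩_∃`: the relations definable by primitive positive formulas over `R`
(existentially quantified conjunctions of atomic formulas over `R`). -/
def ppDef (R : RelFamily A) : RelFamily A := fun n =>
  { ρ | ∃ (m t : ℕ) (r : Fin t → ℕ) (τ : ∀ i : Fin t, Set (Fin (r i) → A))
      (σ : ∀ i : Fin t, Fin (r i) → Fin (n + m)),
      (∀ i, τ i ∈ R (r i)) ∧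
      ρ = { a | ∃ b : Fin m → A, ∀ i, (fun j => Fin.append a b (σ i j)) ∈ τ i } }

/-- `B ⊆ A^k` is closed under the componentwise action of the operations in `C`,
i.e. `B` is a subalgebra (possibly empty) of the `k`-th power. -/
def ClosedUnder (C : OpFamily A) (k : ℕ) (B : Set (Fin k → A)) : Prop :=
  ∀ n, ∀ f ∈ C n, ∀ M : Fin n → Fin k → A,
    (∀ i, M i ∈ B) → (fun j => f (fun i => M i j)) ∈ B

/-- `h` is a homomorphism from the subalgebra `B ≤ A^k` to `A` (w.r.t. the
operations in `C`): it commutes with the componentwise action on tuples from `B`. -/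
def IsHomOn (C : OpFamily A) {k : ℕ} (B : Set (Fin k → A)) (h : Op A k) : Prop :=
  ∀ n, ∀ f ∈ C n, ∀ M : Fin n → Fin k → A, (∀ i, M i ∈ B) →
    h (fun j => f (fun i => M i j)) = f (fun i => h (M i))

/-- The algebra with clone of term operations `C` is polymorphism-homogeneous:
for every `k ≥ 1`, every homomorphism from a subalgebra of `A^k` to `A` extends
to a homomorphism `A^k → A`. -/
def AlgPolyHom (C : OpFamily A) : Prop :=
  ∀ k, 1 ≤ k → ∀ B : Set (Fin k → A), ClosedUnder C k B →
    ∀ h : Op A k, IsHomOn C B h →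
      ∃ g : Op A k, (∀ x ∈ B, g x = h x) ∧ IsHomOn C Set.univ g

/-- The algebra with clone of term operations `C` is homomorphism-homogeneous:
every homomorphism from a subalgebra of `A` to `A` extends to an endomorphism of `A`. -/
def AlgHomHom (C : OpFamily A) : Prop :=
  ∀ B : Set (Fin 1 → A), ClosedUnder C 1 B →
    ∀ h : Op A 1, IsHomOn C B h →
      ∃ g : Op A 1, (∀ x ∈ B, g x = h x) ∧ IsHomOn C Set.univ g

/-- Property (SDC): the algebraic sets (solution sets of systems of equations, i.e.
the quantifier-free pp definable relations over `C°`) are exactly the relations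
closed under the centralizer `C* = Pol C•`. -/
def SDC (C : OpFamily A) : Prop :=
  ∀ n, 1 ≤ n → qfDef (Ccirc C) n = InvRels (PolOps (Cdot C)) n

/-- The subalgebra of `A^k` generated by `S` (w.r.t. the operations of `C`). -/
def Gen (C : OpFamily A) (k : ℕ) (S : Set (Fin k → A)) : Set (Fin k → A) :=
  ⋂₀ { B | ClosedUnder C k B ∧ S ⊆ B }

/-- The algebra with clone of term operations `C` is injective in `SP_fin(A)`,
the class of subalgebras of finite direct powers of `A`: every homomorphism from
a subalgebra `B ≤ B' ≤ A^m` to `A` extends to a homomorphism `B' → A`. -/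
def InjSPfin (C : OpFamily A) : Prop :=
  ∀ m, 1 ≤ m → ∀ B B' : Set (Fin m → A), ClosedUnder C m B → ClosedUnder C m B' → B ⊆ B' →
    ∀ h : Op A m, IsHomOn C B h →
      ∃ g : Op A m, (∀ x ∈ B, g x = h x) ∧ IsHomOn C B' g

end PaperPH

open PaperPH

namespace PaperPH

/-- The basic operations of a lattice `(A; ⊔, ⊓)`: the two binary operations. -/
def latOps (A : Type*) [Lattice A] : OpFamily A := fun n =>
  match n with
  | 2 => ({ fun x => x 0 ⊔ x 1, fun x => x 0 ⊓ x 1 } : Set (Op A 2))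
  | _ => ∅

/-- The algebra `(B; supB, infB)` belongs to `HSP(A)`, the variety generated by the
lattice `A` (signature with two binary operation symbols): it is a homomorphic image
of a subalgebra of a direct power of `A`. -/
def InHSPlat.{u, v} (A : Type u) [Lattice A] (B : Type v) (supB infB : B → B → B) : Prop :=
  ∃ (I : Type v) (S : Set (I → A)) (π : (I → A) → B),
    (∀ x ∈ S, ∀ y ∈ S, (fun i => x i ⊔ y i) ∈ S) ∧
    (∀ x ∈ S, ∀ y ∈ S, (fun i => x i ⊓ y i) ∈ S) ∧
    (∀ x ∈ S, ∀ y ∈ S, π (fun i => x i ⊔ y i) = supB (π x) (π y)) ∧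
    (∀ x ∈ S, ∀ y ∈ S, π (fun i => x i ⊓ y i) = infB (π x) (π y)) ∧
    (∀ b : B, ∃ x ∈ S, π x = b)

/-- The lattice `A` is injective in the variety `HSP(A)`: for members `B ≤ C` of the
variety, every homomorphism `B → A` extends to a homomorphism `C → A`. -/
def InjHSPlat.{u, v} (A : Type u) [Lattice A] : Prop :=
  ∀ (B : Type v) (supB infB : B → B → B), InHSPlat A B supB infB →
    ∀ S : Set B, (∀ x ∈ S, ∀ y ∈ S, supB x y ∈ S ∧ infB x y ∈ S) →
      ∀ h : B → A, (∀ x ∈ S, ∀ y ∈ S, h (supB x y) = h x ⊔ h y ∧ h (infB x y) = h x ⊓ h y) →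
        ∃ g : B → A, (∀ x ∈ S, g x = h x) ∧
          ∀ x y : B, g (supB x y) = g x ⊔ g y ∧ g (infB x y) = g x ⊓ g y

/-- `A` is a finite Boolean lattice, i.e. isomorphic (as a lattice) to a finite direct
power of the two-element chain. -/
def IsFiniteBooleanLattice (A : Type*) [Lattice A] : Prop :=
  ∃ (n : ℕ) (φ : A ≃ (Fin n → Bool)),
    (∀ a b : A, φ (a ⊔ b) = φ a ⊔ φ b) ∧ (∀ a b : A, φ (a ⊓ b) = φ a ⊓ φ b)

end PaperPH

/-- If `A` is a two-element lattice and `C = Clo(A)`, then the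
relational structure `⟨A;C•⟩` is not polymorphism-homogeneous. -/
theorem two_element_lattice_Cdot_not_polyHom (A : Type*) [Fintype A] [Lattice A]
    (hA : Fintype.card A = 2)
    (C : OpFamily A) (hC : C = CloGen (latOps A)) :
    ¬ RelPolyHom (Cdot C) := by
  subst hC
  -- extract the two elements x < y of A
  obtain ⟨x, y, hxy, hle, hall⟩ : ∃ x y : A, x ≠ y ∧ x ≤ y ∧ ∀ c, c = x ∨ c = y := by
    have h' : Nat.card A = 2 := by simp [Nat.card_eq_fintype_card, hA]
    obtain ⟨a, b, hab, h2⟩ := Nat.card_eq_two_iff.mp h'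
    have hc : ∀ c : A, c = a ∨ c = b := fun c => by
      have : c ∈ ({a, b} : Set A) := h2 ▸ Set.mem_univ c
      simpa using this
    rcases hc (a ⊓ b) with h | h
    · exact ⟨a, b, hab, inf_eq_left.mp h, hc⟩
    · exact ⟨b, a, hab.symm, inf_eq_right.mp h, fun c => (hc c).symm⟩
  have hbot : ∀ c : A, x ≤ c := fun c => by rcases hall c with rfl | rfl <;> [exact le_rfl; exact hle]
  have htop : ∀ c : A, c ≤ y := fun c => by rcases hall c with rfl | rfl <;> [exact hle; exact le_rfl]
  have hsx : x ⊔ x = x := sup_idem x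
  have hsy : y ⊔ y = y := sup_idem y
  have hsxy : x ⊔ y = y := sup_eq_right.mpr hle
  have hsyx : y ⊔ x = y := sup_eq_left.mpr hle
  have hixy : x ⊓ y = x := inf_eq_left.mpr hle
  have hiyx : y ⊓ x = x := inf_eq_right.mpr hle
  have hiy : y ⊓ y = y := inf_idem y
  -- the witnesses
  set p : Fin 4 → A := ![x, x, x, y] with hp
  set q : Fin 4 → A := ![x, x, y, x] with hq
  set r : Fin 4 → A := ![x, y, y, y] with hr
  set s : Fin 4 → A := ![y, x, y, y] with hs
  set m : Fin 4 → A := ![x, x, y, y] with hm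
  set D : Set (Fin 4 → A) := {p, q, r, s} with hD
  set h : Op A 4 := fun v => v 0 ⊔ v 1 with hh
  -- every member of the clone is monotone
  have hmono : ∀ n, ∀ f ∈ CloGen (latOps A) n,
      ∀ u v : Fin n → A, (∀ i, u i ≤ v i) → f u ≤ f v := by
    intro n f hf
    refine hf (fun n => {g : Op A n | ∀ u v : Fin n → A, (∀ i, u i ≤ v i) → g u ≤ g v}) ?_ ?_
    · constructor
      · intro n i u v huv; exact huv i
      · intro n k f g hf hg u v huv
        exact hf _ _ fun i => hg i u v huv
    · intro m g hg
      rcases m with _ | _ | _ | m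
      · exact absurd hg (Set.notMem_empty _)
      · exact absurd hg (Set.notMem_empty _)
      · rcases hg with rfl | hg
        · intro u v huv; exact sup_le_sup (huv 0) (huv 1)
        · rw [Set.mem_singleton_iff] at hg; subst hg
          intro u v huv; exact inf_le_inf (huv 0) (huv 1)
      · exact absurd hg (Set.notMem_empty _)
  -- binary sup and inf are in the clone
  have hsupC : (fun v : Fin 2 → A => v 0 ⊔ v 1) ∈ CloGen (latOps A) 2 :=
    fun Cl _ hsub => hsub 2 (Set.mem_insert _ _)
  have hinfC : (fun v : Fin 2 → A => v 0 ⊓ v 1) ∈ CloGen (latOps A) 2 :=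
    fun Cl _ hsub => hsub 2 (Set.mem_insert_of_mem _ rfl)
  -- h preserves all graphs on D
  have hpres : pPreservesAll D h (Cdot (CloGen (latOps A))) := by
    intro n ρ hρ
    match n with
    | 0 => exact absurd hρ (Set.notMem_empty _)
    | Nat.succ n =>
      obtain ⟨f, hf, rfl⟩ := hρ
      intro M hMD hMcol
      have hcol : ∀ j : Fin 4, f (fun i => M i.castSucc j) = M (Fin.last n) j :=
        fun j => hMcol j
      show f (fun i => h (M i.castSucc)) = h (M (Fin.last n))
      have hveq : (fun i : Fin n => h (M i.castSucc))
          = fun i : Fin n => M i.castSucc 0 ⊔ M i.castSucc 1 := rfl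
      set v : Fin n → A := fun i => M i.castSucc 0 ⊔ M i.castSucc 1 with hv
      rw [hveq]
      -- sandwich inequalities, pointwise
      have hrow : ∀ w ∈ D, w 0 ⊔ w 1 ≤ w 2 ∧ w 0 ⊔ w 1 ≤ w 3 := by
        intro w hw
        rcases hw with rfl | rfl | rfl | rfl <;>
          constructor <;>
          simp [hp, hq, hr, hs, hsx, hsxy, hsyx, hsy] <;>
          first | exact hle | exact le_rfl
      have h0v : f (fun i => M i.castSucc 0) ≤ f v :=
        hmono _ f hf _ _ fun i => le_sup_left
      have h1v : f (fun i => M i.castSucc 1) ≤ f v :=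
        hmono _ f hf _ _ fun i => le_sup_right
      have hv2 : f v ≤ f (fun i => M i.castSucc 2) :=
        hmono _ f hf _ _ fun i => (hrow _ (hMD i.castSucc)).1
      have hv3 : f v ≤ f (fun i => M i.castSucc 3) :=
        hmono _ f hf _ _ fun i => (hrow _ (hMD i.castSucc)).2
      rw [hcol 0] at h0v; rw [hcol 1] at h1v; rw [hcol 2] at hv2; rw [hcol 3] at hv3
      have ht := hMD (Fin.last n)
      rcases ht with ht | ht | ht | ht <;> rw [ht] <;> rw [ht] at h0v h1v hv2 hv3
      · -- last row is p : f v ≤ p 2 = x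
        have : f v ≤ x := by simpa [hp] using hv2
        simp [hh, hp, hsx]
        exact le_antisymm this (hbot _)
      · -- last row is q : f v ≤ q 3 = x
        have : f v ≤ x := by simpa [hq] using hv3
        simp [hh, hq, hsx]
        exact le_antisymm this (hbot _)
      · -- last row is r : r 1 = y ≤ f v
        have : y ≤ f v := by simpa [hr] using h1v
        simp [hh, hr, hsxy]
        exact le_antisymm (htop _) this
      · -- last row is s : s 0 = y ≤ f v
        have : y ≤ f v := by simpa [hs] using h0v
        simp [hh, hs, hsyx]
        exact le_antisymm (htop _) this
  -- now suppose polymorphism-homogeneity and derive a contradiction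
  intro H
  obtain ⟨g, hgD, hgP⟩ := H 4 (by norm_num) D h hpres
  have hgp : g p = x := by rw [hgD p (by simp [hD])]; simp [hh, hp, hsx]
  have hgq : g q = x := by rw [hgD q (by simp [hD])]; simp [hh, hq, hsx]
  have hgr : g r = y := by rw [hgD r (by simp [hD])]; simp [hh, hr, hsxy]
  have hgs : g s = y := by rw [hgD s (by simp [hD])]; simp [hh, hs, hsyx]
  -- g m via sup
  have hgm1 : g p ⊔ g q = g m := by
    have hmem : graphRel (fun v : Fin 2 → A => v 0 ⊔ v 1)
        ∈ Cdot (CloGen (latOps A)) 3 := ⟨_, hsupC, rfl⟩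
    have := hgP 3 _ hmem ![p, q, m] (fun _ => Set.mem_univ _) ?_
    · exact this
    · intro j
      show (![p, q, m] ((0 : Fin 2).castSucc) j) ⊔ (![p, q, m] ((1 : Fin 2).castSucc) j)
        = ![p, q, m] (Fin.last 2) j
      show p j ⊔ q j = m j
      fin_cases j <;> simp [hp, hq, hm, hsx, hsxy, hsyx, hsy]
  have hgm2 : g r ⊓ g s = g m := by
    have hmem : graphRel (fun v : Fin 2 → A => v 0 ⊓ v 1)
        ∈ Cdot (CloGen (latOps A)) 3 := ⟨_, hinfC, rfl⟩
    have := hgP 3 _ hmem ![r, s, m] (fun _ => Set.mem_univ _) ?_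
    · exact this
    · intro j
      show (![r, s, m] ((0 : Fin 2).castSucc) j) ⊓ (![r, s, m] ((1 : Fin 2).castSucc) j)
        = ![r, s, m] (Fin.last 2) j
      show r j ⊓ s j = m j
      fin_cases j <;> simp [hr, hs, hm, hixy, hiyx, hiy]
  rw [hgp, hgq, hsx] at hgm1
  rw [hgr, hgs, hiy] at hgm2
  exact hxy (hgm1.trans hgm2.symm)
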